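/- arXiv:2003.04546 — 9 statements merged into one kernel-verified Lean document; each statement's English description precedes it below -/
import Mathlib

section
/- Let A be a symmetric d×d real matrix, b ∈ ℝ^d, ρ > 0, and let f(x) = (1/2)xᵀAx + bᵀx + (ρ/3)‖x‖³. If s ∈ ℝ^d satisfies (A + ρ‖s‖I)s + b = 0 and A + ρ‖s‖I ⪰ 0, then for every x ∈ ℝ^d, f(x) = f(s) + (1/2)(x−s)ᵀ(A + ρ‖s‖I)(x−s) + (ρ/6)(‖s‖ − ‖x‖)²(‖s‖ + 2‖x‖). In particular, s is a global minimizer of f. -/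
/-!
Put `B = A + ρ‖s‖ I`. Stationarity says `b = -B s`, so completing the square gives
`(½ xᵀAx + bᵀx) - (½ sᵀAs + bᵀs) = ½ (x - s)ᵀB(x - s) - (ρ‖s‖/2)(‖x‖² - ‖s‖²)`.
Adding the cubic terms, `(ρ/3)(ξ³ - σ³) - (ρσ/2)(ξ² - σ²) = (ρ/6)(σ - ξ)²(σ + 2ξ)` for `σ = ‖s‖`,
`ξ = ‖x‖`. Both summands are nonnegative when `B ⪰ 0`, so `s` is a global minimizer.
-/

open Matrix

noncomputable def eNorm {d : ℕ} (x : Fin d → ℝ) : ℝ := Real.sqrt (x ⬝ᵥ x)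

lemma eNorm_nonneg {d : ℕ} (x : Fin d → ℝ) : 0 ≤ eNorm x := Real.sqrt_nonneg _

lemma eNorm_sq {d : ℕ} (x : Fin d → ℝ) : eNorm x ^ 2 = x ⬝ᵥ x :=
  Real.sq_sqrt (by simpa using dotProduct_self_star_nonneg x)

namespace Matrix

variable {n R : Type*} [Fintype n]

lemma IsSymm.dotProduct_mulVec_comm [CommSemiring R] {B : Matrix n n R} (hB : B.IsSymm)
    (x y : n → R) : x ⬝ᵥ B *ᵥ y = y ⬝ᵥ B *ᵥ x := by
  rw [dotProduct_mulVec, ← mulVec_transpose, hB.eq, dotProduct_comm]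

lemma IsSymm.dotProduct_mulVec_sub_sub [CommRing R] {B : Matrix n n R} (hB : B.IsSymm)
    (x y : n → R) :
    (x - y) ⬝ᵥ B *ᵥ (x - y) = x ⬝ᵥ B *ᵥ x - 2 * (x ⬝ᵥ B *ᵥ y) + y ⬝ᵥ B *ᵥ y := by
  rw [mulVec_sub, dotProduct_sub, sub_dotProduct, sub_dotProduct, hB.dotProduct_mulVec_comm y x]
  ring

lemma IsSymm.quadratic_sub_eq_of_mulVec_add_eq_zero [DecidableEq n] {A : Matrix n n ℝ}
    (hA : A.IsSymm) {c : ℝ} {b s : n → ℝ} (hs : (A + c • 1) *ᵥ s + b = 0) (x : n → ℝ) :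
    (1/2 * (x ⬝ᵥ A *ᵥ x) + b ⬝ᵥ x) - (1/2 * (s ⬝ᵥ A *ᵥ s) + b ⬝ᵥ s) =
      1/2 * ((x - s) ⬝ᵥ (A + c • 1) *ᵥ (x - s)) - c/2 * (x ⬝ᵥ x - s ⬝ᵥ s) := by
  have hB : (A + c • 1).IsSymm := hA.add (isSymm_one.smul c)
  rw [eq_neg_of_add_eq_zero_right hs, hB.dotProduct_mulVec_sub_sub]
  simp only [add_mulVec, smul_mulVec, one_mulVec, dotProduct_add, dotProduct_smul, smul_eq_mul,
    neg_dotProduct, add_dotProduct, smul_dotProduct]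
  rw [dotProduct_comm (A *ᵥ s) x, dotProduct_comm (A *ᵥ s) s, dotProduct_comm s x]
  ring

end Matrix

theorem stmt_0 {d : ℕ} (A : Matrix (Fin d) (Fin d) ℝ) (hA : A.IsSymm)
    (b : Fin d → ℝ) (ρ : ℝ) (hρ : 0 < ρ)
    (f : (Fin d → ℝ) → ℝ)
    (hf : ∀ x, f x = (1/2) * (x ⬝ᵥ A.mulVec x) + b ⬝ᵥ x + (ρ/3) * eNorm x ^ 3)
    (s : Fin d → ℝ)
    (hstat : (A + (ρ * eNorm s) • (1 : Matrix (Fin d) (Fin d) ℝ)).mulVec s + b = 0)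
    (hpsd : (A + (ρ * eNorm s) • (1 : Matrix (Fin d) (Fin d) ℝ)).PosSemidef) :
    (∀ x, f x = f s
      + (1/2) * ((x - s) ⬝ᵥ (A + (ρ * eNorm s) • (1 : Matrix (Fin d) (Fin d) ℝ)).mulVec (x - s))
      + (ρ/6) * (eNorm s - eNorm x)^2 * (eNorm s + 2 * eNorm x)) ∧
    (∀ x, f s ≤ f x) := by
  have expansion : ∀ x, f x = f s
      + (1/2) * ((x - s) ⬝ᵥ (A + (ρ * eNorm s) • (1 : Matrix (Fin d) (Fin d) ℝ)).mulVec (x - s))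
      + (ρ/6) * (eNorm s - eNorm x)^2 * (eNorm s + 2 * eNorm x) := fun x => by
    rw [hf x, hf s]
    linear_combination hA.quadratic_sub_eq_of_mulVec_add_eq_zero hstat x
      + ρ * eNorm s / 2 * (eNorm_sq x - eNorm_sq s)
  refine ⟨expansion, fun x => ?_⟩
  have hquad := hpsd.dotProduct_mulVec_nonneg (x - s)
  have hcubic : 0 ≤ ρ / 6 * (eNorm s - eNorm x) ^ 2 * (eNorm s + 2 * eNorm x) := by
    have := eNorm_nonneg s
    have := eNorm_nonneg x
    positivity
  rw [expansion x]
  simp only [star_trivial] at hquad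
  linarith
end

section
/- Let A be symmetric with minimum eigenvalue λ_min, b ∈ ℝ^d, ρ > 0, and let s be a global minimizer of f(x) = (1/2)xᵀAx + bᵀx + (ρ/3)‖x‖³, so that (A + ρ‖s‖I)s + b = 0 and λ_min + ρ‖s‖ ≥ 0. Then ‖s‖ ≤ −λ_min/(2ρ) + sqrt((λ_min/(2ρ))² + ‖b‖/ρ). -/
open Matrix

lemma dot_le_eNorm {d : ℕ} (x y : Fin d → ℝ) : x ⬝ᵥ y ≤ eNorm x * eNorm y := by
  unfold eNorm dotProduct
  calc ∑ i, x i * y i ≤ Real.sqrt (∑ i, x i ^ 2) * Real.sqrt (∑ i, y i ^ 2) :=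
        Real.sum_mul_le_sqrt_mul_sqrt _ _ _
    _ = _ := by simp [sq]

theorem stmt_1 {d : ℕ} (A : Matrix (Fin d) (Fin d) ℝ) (hA : A.IsSymm)
    (lmin : ℝ)
    (hmin : ∀ x, lmin * (x ⬝ᵥ x) ≤ x ⬝ᵥ A.mulVec x)
    (hex : ∃ v : Fin d → ℝ, v ≠ 0 ∧ A.mulVec v = lmin • v)
    (b : Fin d → ℝ) (ρ : ℝ) (hρ : 0 < ρ)
    (f : (Fin d → ℝ) → ℝ)
    (hf : ∀ x, f x = (1/2) * (x ⬝ᵥ A.mulVec x) + b ⬝ᵥ x + (ρ/3) * eNorm x ^ 3)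
    (s : Fin d → ℝ)
    (hglob : ∀ x, f s ≤ f x)
    (hstat : (A + (ρ * eNorm s) • (1 : Matrix (Fin d) (Fin d) ℝ)).mulVec s + b = 0)
    (hgeq : lmin + ρ * eNorm s ≥ 0) :
    eNorm s ≤ -lmin / (2 * ρ) + Real.sqrt ((lmin / (2 * ρ))^2 + eNorm b / ρ) := by
  set t := eNorm s with ht
  set B := eNorm b with hB
  have htn : 0 ≤ t := eNorm_nonneg s
  have hBn : 0 ≤ B := eNorm_nonneg b
  have hts : t ^ 2 = s ⬝ᵥ s := eNorm_sq s
  -- dot the stationarity equation with s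
  have h1 : s ⬝ᵥ A.mulVec s + ρ * t * (s ⬝ᵥ s) + s ⬝ᵥ b = 0 := by
    have := congrArg (fun v => s ⬝ᵥ v) hstat
    simpa [add_mulVec, smul_mulVec, one_mulVec, dotProduct_add,
      dotProduct_smul, smul_eq_mul] using this
  -- key scalar inequality at t
  have hkey : lmin * t ^ 2 + ρ * t ^ 3 ≤ B * t := by
    have hcs : s ⬝ᵥ b ≤ t * B := by
      have := dot_le_eNorm s b; linarith [this]
    have hm := hmin s
    have h2 : lmin * (s ⬝ᵥ s) + ρ * t * (s ⬝ᵥ s) ≤ - (s ⬝ᵥ b) := by linarith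
    have : (- (s ⬝ᵥ b)) ≤ t * B := by
      have h3 := dot_le_eNorm s (-b)
      have : s ⬝ᵥ (-b) = - (s ⬝ᵥ b) := by simp
      have h4 : eNorm (-b) = B := by
        unfold eNorm; rw [hB]; unfold eNorm; congr 1; simp [dotProduct]
      calc - (s ⬝ᵥ b) = s ⬝ᵥ (-b) := by simp
        _ ≤ eNorm s * eNorm (-b) := dot_le_eNorm s (-b)
        _ = t * B := by rw [h4]
    nlinarith [hts]
  have hq : lmin * t + ρ * t ^ 2 ≤ B := by
    rcases eq_or_lt_of_le htn with h0 | h0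
    · rw [← h0]; simpa using hBn
    · have := hkey
      nlinarith
  -- conclude : t + lmin/(2ρ) ≤ sqrt D
  have hD : (t + lmin / (2 * ρ)) ^ 2 ≤ (lmin / (2 * ρ)) ^ 2 + B / ρ := by
    have hq' : (lmin * t + ρ * t ^ 2) / ρ ≤ B / ρ := (div_le_div_iff_of_pos_right hρ).mpr hq
    have heq : (lmin * t + ρ * t ^ 2) / ρ = lmin / ρ * t + t ^ 2 := by
      field_simp
    have hexp : (t + lmin / (2 * ρ)) ^ 2
        = t ^ 2 + lmin / ρ * t + (lmin / (2 * ρ)) ^ 2 := by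
      field_simp
      ring
    linarith
  have hsq := Real.sqrt_le_sqrt hD
  rw [Real.sqrt_sq_eq_abs] at hsq
  have habs : t + lmin / (2 * ρ) ≤ |t + lmin / (2 * ρ)| := le_abs_self _
  have hneg : -lmin / (2 * ρ) = -(lmin / (2 * ρ)) := neg_div _ _
  linarith [habs.trans hsq]
end

section
/- Let A be symmetric with unit eigenvector v₁ corresponding to its minimum eigenvalue λ_min, let b ∈ ℝ^d with v₁ᵀb ≠ 0, ρ > 0. If x is a stationary point of f(x) = (1/2)xᵀAx + bᵀx + (ρ/3)‖x‖³ (i.e., (A + ρ‖x‖I)x + b = 0) satisfying (v₁ᵀb)(v₁ᵀx) ≤ 0, then necessarily (v₁ᵀb)(v₁ᵀx) < 0, ρ‖x‖ > max{−λ_min, 0}, and x is the unique global minimizer of f. -/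
open Matrix

lemma dot_self_nonneg {d : ℕ} (x : Fin d → ℝ) : 0 ≤ x ⬝ᵥ x :=
  Finset.sum_nonneg fun i _ => mul_self_nonneg (x i)

theorem stmt_3 {d : ℕ} (A : Matrix (Fin d) (Fin d) ℝ) (hA : A.IsSymm)
    (lmin : ℝ) (v₁ : Fin d → ℝ)
    (hv₁unit : eNorm v₁ = 1)
    (hv₁eig : A.mulVec v₁ = lmin • v₁)
    (hmin : ∀ y, lmin * (y ⬝ᵥ y) ≤ y ⬝ᵥ A.mulVec y)
    (b : Fin d → ℝ) (hb : v₁ ⬝ᵥ b ≠ 0) (ρ : ℝ) (hρ : 0 < ρ)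
    (f : (Fin d → ℝ) → ℝ)
    (hf : ∀ y, f y = (1/2) * (y ⬝ᵥ A.mulVec y) + b ⬝ᵥ y + (ρ/3) * eNorm y ^ 3)
    (x : Fin d → ℝ)
    (hstat : (A + (ρ * eNorm x) • (1 : Matrix (Fin d) (Fin d) ℝ)).mulVec x + b = 0)
    (hsign : (v₁ ⬝ᵥ b) * (v₁ ⬝ᵥ x) ≤ 0) :
    (v₁ ⬝ᵥ b) * (v₁ ⬝ᵥ x) < 0 ∧
    ρ * eNorm x > max (-lmin) 0 ∧
    (∀ y, f x ≤ f y) ∧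
    (∀ y, y ≠ x → f x < f y) := by
  set s := eNorm x with hs
  set σ := ρ * s with hσ
  -- symmetry of the quadratic form
  have hsymm : ∀ u w : Fin d → ℝ, u ⬝ᵥ A.mulVec w = w ⬝ᵥ A.mulVec u := by
    intro u w
    rw [dotProduct_mulVec, ← mulVec_transpose, hA.eq, dotProduct_comm]
  -- b in terms of x
  have hbeq : b = -(A.mulVec x + σ • x) := by
    have := hstat
    rw [add_mulVec, smul_mulVec, one_mulVec] at this
    linear_combination (norm := module) this
  -- eigen relation dotted with x
  have hv₁x : v₁ ⬝ᵥ A.mulVec x = lmin * (v₁ ⬝ᵥ x) := by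
    rw [hsymm, hv₁eig, dotProduct_smul, smul_eq_mul, dotProduct_comm]
  have hkey1 : lmin * (v₁ ⬝ᵥ x) + σ * (v₁ ⬝ᵥ x) + v₁ ⬝ᵥ b = 0 := by
    have h0 : v₁ ⬝ᵥ ((A + σ • (1 : Matrix (Fin d) (Fin d) ℝ)).mulVec x + b) = 0 := by
      rw [hstat]; simp [dotProduct]
    rw [dotProduct_add, add_mulVec, smul_mulVec, one_mulVec, dotProduct_add,
      dotProduct_smul, smul_eq_mul, hv₁x] at h0
    linarith
  -- v₁ ⬝ᵥ x ≠ 0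
  have hcx : v₁ ⬝ᵥ x ≠ 0 := by
    intro h
    apply hb
    rw [h] at hkey1; linarith
  have hp : (v₁ ⬝ᵥ b) * (v₁ ⬝ᵥ x) = -(lmin + σ) * (v₁ ⬝ᵥ x) ^ 2 := by
    have : v₁ ⬝ᵥ b = -(lmin + σ) * (v₁ ⬝ᵥ x) := by linarith
    rw [this]; ring
  have hplt : (v₁ ⬝ᵥ b) * (v₁ ⬝ᵥ x) < 0 :=
    lt_of_le_of_ne hsign (mul_ne_zero hb hcx)
  have hcx2 : 0 < (v₁ ⬝ᵥ x) ^ 2 := pow_pos (abs_pos.mpr hcx) 2 |> fun h => by rw [← sq_abs]; exact h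
  have hls : 0 < lmin + σ := by
    nlinarith [sq_nonneg (v₁ ⬝ᵥ x)]
  -- x ≠ 0, so s > 0
  have hxne : x ≠ 0 := by
    intro h; apply hcx; rw [h]; simp [dotProduct]
  have hspos : 0 < s := by
    rcases lt_or_eq_of_le (eNorm_nonneg x) with h | h
    · exact h
    · exfalso
      apply hxne
      have h2 : x ⬝ᵥ x = 0 := by
        have h3 := eNorm_sq x; rw [← h] at h3; simpa using h3.symm
      exact dotProduct_self_eq_zero.mp h2
  have hσpos : 0 < σ := mul_pos hρ hspos
  have hmax : ρ * eNorm x > max (-lmin) 0 := by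
    rw [← hs, ← hσ]
    exact max_lt (by linarith) hσpos
  -- key global inequality
  have key : ∀ y, f x + (lmin + σ)/2 * ((y - x) ⬝ᵥ (y - x))
      + ρ/6 * (eNorm y - s)^2 * (2 * eNorm y + s) ≤ f y := by
    intro y
    set t := eNorm y with ht
    have hs2 : s ^ 2 = x ⬝ᵥ x := eNorm_sq x
    have ht2 : t ^ 2 = y ⬝ᵥ y := eNorm_sq y
    set u := x ⬝ᵥ y with hu
    set qyy := y ⬝ᵥ A.mulVec y with hqyy
    set qxy := x ⬝ᵥ A.mulVec y with hqxy
    set qxx := x ⬝ᵥ A.mulVec x with hqxx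
    have hby : b ⬝ᵥ y = -qxy - σ * u := by
      rw [hbeq, neg_dotProduct, add_dotProduct, smul_dotProduct, smul_eq_mul,
        dotProduct_comm (A.mulVec x) y, hsymm y x, ← hqxy, ← hu]
      ring
    have hbx : b ⬝ᵥ x = -qxx - σ * s ^ 2 := by
      rw [hbeq, neg_dotProduct, add_dotProduct, smul_dotProduct, smul_eq_mul, ← hs2,
        dotProduct_comm (A.mulVec x) x, hsymm x x, ← hqxx]
      ring
    have hq : lmin * (t ^ 2 - 2 * u + s ^ 2) ≤ qyy - 2 * qxy + qxx := by
      have h1 := hmin (y - x)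
      have hw : (y - x) ⬝ᵥ (y - x) = t ^ 2 - 2 * u + s ^ 2 := by
        rw [sub_dotProduct, dotProduct_sub, dotProduct_sub, ← ht2, ← hs2,
          dotProduct_comm y x, ← hu]
        ring
      have hq2 : (y - x) ⬝ᵥ A.mulVec (y - x) = qyy - 2 * qxy + qxx := by
        rw [mulVec_sub, sub_dotProduct, dotProduct_sub, dotProduct_sub, ← hqyy, ← hqxx,
          hsymm y x, ← hqxy]
        ring
      rw [hw, hq2] at h1
      exact h1
    have hw : (y - x) ⬝ᵥ (y - x) = t ^ 2 - 2 * u + s ^ 2 := by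
      rw [sub_dotProduct, dotProduct_sub, dotProduct_sub, ← ht2, ← hs2,
        dotProduct_comm y x, ← hu]
      ring
    rw [hf y, hf x, hby, hbx, hw, ← hqyy, ← hqxx, ← ht, ← hs, hσ]
    nlinarith [hq]
  have hmin' : ∀ y, f x ≤ f y := by
    intro y
    have h1 := key y
    have h2 : 0 ≤ (lmin + σ)/2 * ((y - x) ⬝ᵥ (y - x)) :=
      mul_nonneg (by linarith) (dot_self_nonneg _)
    have h3 : 0 ≤ ρ/6 * (eNorm y - s)^2 * (2 * eNorm y + s) := by
      have := eNorm_nonneg y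
      positivity
    linarith
  refine ⟨hplt, hmax, hmin', ?_⟩
  intro y hy
  have h1 := key y
  have hw : 0 < (y - x) ⬝ᵥ (y - x) := by
    rcases lt_or_eq_of_le (dot_self_nonneg (y - x)) with h | h
    · exact h
    · exfalso; exact hy (sub_eq_zero.mp (dotProduct_self_eq_zero.mp h.symm))
  have h2 : 0 < (lmin + σ)/2 * ((y - x) ⬝ᵥ (y - x)) := mul_pos (by linarith) hw
  have h3 : 0 ≤ ρ/6 * (eNorm y - s)^2 * (2 * eNorm y + s) := by
    have := eNorm_nonneg y
    positivity
  linarith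
end

section
/- In the setting of the monotone recursion z_t^{(i)} = (1 − χ^{(i)} − ν_{t−1})z_{t−1}^{(i)} + 1 with z₀^{(i)} = c₀ ≥ 0, χ^{(i)} ≤ χ^{(j)} for i ≤ j, nondecreasing nonnegative ν_t, and 1 − χ^{(i)} − ν_t ≥ 0, the inequality z_{t'}^{(i)} − z_{t'}^{(j)} ≤ (χ^{(j)} − χ^{(i)}) z_{t'}^{(i)} z_{t'}^{(j)} holds for all i ≤ j and all t' such that z_τ^{(j)} ≥ z_{τ−1}^{(j)} for every τ ≤ t'. -/
theorem stmt_6 {d : ℕ} (χ : Fin d → ℝ) (hχ : Monotone χ)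
    (ν : ℕ → ℝ) (hν0 : ∀ t, 0 ≤ ν t) (hνmono : Monotone ν)
    (hstep : ∀ (i : Fin d) (t : ℕ), 1 - χ i - ν t ≥ 0)
    (c₀ : ℝ) (hc₀ : 0 ≤ c₀)
    (z : ℕ → Fin d → ℝ)
    (hz0 : ∀ i, z 0 i = c₀)
    (hrec : ∀ (t : ℕ) (i : Fin d), z (t + 1) i = (1 - χ i - ν t) * z t i + 1) :
    ∀ (i j : Fin d), i ≤ j → ∀ t' : ℕ,
      (∀ τ : ℕ, τ < t' → z (τ + 1) j ≥ z τ j) →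
      z t' i - z t' j ≤ (χ j - χ i) * z t' i * z t' j := by
  have hz_nonneg : ∀ t i, 0 ≤ z t i := by
    intro t
    induction t with
    | zero => intro i; rw [hz0]; exact hc₀
    | succ t ih =>
      intro i
      rw [hrec]
      have h1 := hstep i t
      have h2 := ih i
      nlinarith
  intro i j hij t'
  induction t' with
  | zero =>
    intro _
    rw [hz0, hz0]
    have hδ : 0 ≤ χ j - χ i := by have := hχ hij; linarith
    nlinarith [mul_nonneg (mul_nonneg hδ hc₀) hc₀]
  | succ t ih =>
    intro h
    have ih' := ih (fun τ hτ => h τ (Nat.lt_succ_of_lt hτ))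
    have hmono := h t (Nat.lt_succ_self t)
    have hδ : 0 ≤ χ j - χ i := by have := hχ hij; linarith
    have ha := hstep i t
    have hb := hstep j t
    have hzi := hz_nonneg t i
    have hzj := hz_nonneg t j
    have hzi1 := hz_nonneg (t + 1) i
    rw [hrec, hrec]
    rw [hrec] at hmono hzi1
    nlinarith [mul_le_mul_of_nonneg_left ih' ha,
      mul_le_mul_of_nonneg_left hmono (mul_nonneg hδ hzi1),
      mul_nonneg (mul_nonneg hδ hzj) hzi]
end

section
/- Let A be symmetric with ‖A‖_op ≤ β, b ∈ ℝ^d, ρ > 0, f(x) = (1/2)xᵀAx + bᵀx + (ρ/3)‖x‖³. Then for every x with ‖x‖ > R_low := −λ_min/(2ρ) + sqrt((λ_min/(2ρ))² + ‖b‖/ρ), one has xᵀ∇f(x) > 0, where ∇f(x) = Ax + b + ρ‖x‖x. -/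
open Matrix

theorem stmt_7 {d : ℕ} (A : Matrix (Fin d) (Fin d) ℝ) (hA : A.IsSymm)
    (β : ℝ) (hop : ∀ x, eNorm (A.mulVec x) ≤ β * eNorm x)
    (lmin : ℝ)
    (hmin : ∀ x, lmin * (x ⬝ᵥ x) ≤ x ⬝ᵥ A.mulVec x)
    (hex : ∃ v : Fin d → ℝ, v ≠ 0 ∧ A.mulVec v = lmin • v)
    (b : Fin d → ℝ) (ρ : ℝ) (hρ : 0 < ρ)
    (Rlow : ℝ)
    (hRlow : Rlow = -lmin / (2 * ρ) + Real.sqrt ((lmin / (2 * ρ))^2 + eNorm b / ρ)) :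
    ∀ x : Fin d → ℝ, eNorm x > Rlow →
      0 < x ⬝ᵥ (A.mulVec x + (ρ * eNorm x) • x + b) := by
  intro x hx
  set n : ℝ := eNorm x with hn
  set nb : ℝ := eNorm b with hnb
  have hn0 : 0 ≤ n := Real.sqrt_nonneg _
  have hnb0 : 0 ≤ nb := Real.sqrt_nonneg _
  have hxx : x ⬝ᵥ x = n ^ 2 := by
    rw [hn, eNorm, Real.sq_sqrt]
    · exact Finset.sum_nonneg fun i _ => mul_self_nonneg _
  have hbb : b ⬝ᵥ b = nb ^ 2 := by
    rw [hnb, eNorm, Real.sq_sqrt]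
    · exact Finset.sum_nonneg fun i _ => mul_self_nonneg _
  -- Cauchy-Schwarz: -(n*nb) ≤ x ⬝ᵥ b
  have hCS : -(n * nb) ≤ x ⬝ᵥ b := by
    have h := Real.sum_mul_le_sqrt_mul_sqrt Finset.univ (fun i => -x i) b
    have h1 : Real.sqrt (∑ i, (-x i) ^ 2) = n := by
      rw [hn, eNorm, dotProduct]
      congr 1
      apply Finset.sum_congr rfl
      intro i _; ring
    have h2 : Real.sqrt (∑ i, b i ^ 2) = nb := by
      rw [hnb, eNorm, dotProduct]
      congr 1
      apply Finset.sum_congr rfl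
      intro i _; ring
    rw [h1, h2] at h
    have h3 : ∑ i, (-x i) * b i = -(x ⬝ᵥ b) := by
      rw [dotProduct, ← Finset.sum_neg_distrib]
      apply Finset.sum_congr rfl
      intro i _; ring
    rw [h3] at h
    linarith
  have hAx : lmin * n ^ 2 ≤ x ⬝ᵥ A.mulVec x := by
    have := hmin x
    rwa [hxx] at this
  -- Rlow properties
  set c : ℝ := lmin / (2 * ρ) with hc
  set s : ℝ := Real.sqrt (c ^ 2 + nb / ρ) with hs
  have hs0 : 0 ≤ s := Real.sqrt_nonneg _
  have hssq : s ^ 2 = c ^ 2 + nb / ρ := by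
    rw [hs, Real.sq_sqrt]
    positivity
  have hsc : |c| ≤ s := by
    rw [hs, ← Real.sqrt_sq_eq_abs]
    apply Real.sqrt_le_sqrt
    nlinarith [div_nonneg hnb0 hρ.le]
  have hR0 : 0 ≤ Rlow := by
    rw [hRlow]
    have h1 : -lmin / (2 * ρ) = -c := by rw [hc]; ring
    rw [h1]
    cases' abs_cases c with h h <;> linarith
  have hRroot : ρ * Rlow ^ 2 + lmin * Rlow - nb = 0 := by
    have hR : Rlow = -c + s := by rw [hRlow]; rw [hc]; ring
    have hlc : lmin = 2 * ρ * c := by rw [hc]; field_simp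
    rw [hR, hlc]
    have hρ' : ρ ≠ 0 := ne_of_gt hρ
    field_simp at hssq ⊢
    nlinarith [hssq]
  have hn0' : 0 < n := lt_of_le_of_lt hR0 hx
  -- quadratic positivity
  have hquad : 0 < ρ * n ^ 2 + lmin * n - nb := by
    have hfac : ρ * n ^ 2 + lmin * n - nb
        = (n - Rlow) * (ρ * (n + Rlow) + lmin) + (ρ * Rlow ^ 2 + lmin * Rlow - nb) := by
      ring
    rw [hfac, hRroot, add_zero]
    apply mul_pos (by linarith)
    have h2s : ρ * (2 * Rlow) + lmin = 2 * ρ * s := by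
      rw [hRlow]
      field_simp
      ring
    nlinarith [mul_pos hρ hn0', hs0, hρ]
  -- expand the goal
  have hexp : x ⬝ᵥ (A.mulVec x + (ρ * n) • x + b)
      = x ⬝ᵥ A.mulVec x + (ρ * n) * (x ⬝ᵥ x) + x ⬝ᵥ b := by
    rw [dotProduct_add, dotProduct_add, dotProduct_smul]
    simp [smul_eq_mul]
  rw [hexp, hxx]
  nlinarith [mul_pos hρ hn0', hn0', hquad, mul_pos hn0' hn0']
end

section
/- Let M be a symmetric positive semidefinite matrix with α I ⪯ M ⪯ β I for 0 < α ≤ β and let κ = β/α. For every t ≥ 1 there exists a polynomial p of degree at most t−1 (depending only on α, β, t) such that ‖I − M p(M)‖_op ≤ 2 exp(−2t/√κ). -/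
open Matrix

/-!
Let `x₀ = (β + α) / (β - α) = (κ + 1) / (κ - 1)` and
`q(x) = T_t((β + α - 2x) / (β - α)) / T_t(x₀)`, with `T_t` the Chebyshev polynomial.
Then `q(0) = 1`, and since `|T_t| ≤ 1` on `[-1, 1]`, `|q| ≤ 1 / T_t(x₀)` on `[α, β]`.
Writing `x₀ = cosh θ` with `θ = log ((√κ + 1) / (√κ - 1)) ≥ 2 / √κ` gives
`T_t(x₀) = cosh (t θ) ≥ exp (2t / √κ) / 2`.
Finally `1 - q = X p` with `deg p ≤ t - 1`, so `I - M p(M) = q(M)`, whose operator norm is at most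
the supremum of `|q|` on the spectrum of `M`; the Rayleigh bounds put that spectrum in `[α, β]`.
-/

open Polynomial Real

lemma one_sub_X_mul_divX_one_sub {R : Type*} [CommRing R] {q : R[X]} (hq : q.eval 0 = 1) :
    1 - X * (1 - q).divX = q := by
  have h := X_mul_divX_add (1 - q)
  rw [coeff_zero_eq_eval_zero, eval_sub, eval_one, hq, sub_self, C_0, add_zero] at h
  rw [h, sub_sub_cancel]

lemma natDegree_divX_one_sub_le {R : Type*} [CommRing R] (q : R[X]) :
    (1 - q).divX.natDegree ≤ q.natDegree - 1 := by
  rw [natDegree_divX_eq_natDegree_tsub_one]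
  exact Nat.sub_le_sub_right ((natDegree_sub_le _ _).trans (by simp)) 1

section Chebyshev

open Polynomial.Chebyshev

lemma two_div_le_log_div_sub_one {σ : ℝ} (hσ : 1 < σ) : 2 / σ ≤ log ((σ + 1) / (σ - 1)) := by
  -- `2 / σ` is the first term of the series `log ((1 + y) / (1 - y)) = ∑ 2 y ^ (2k+1) / (2k+1)`
  -- at `y = 1 / σ`, whose terms are all nonnegative.
  have hsum := hasSum_log_one_add_inv (a := (σ - 1) / 2) (by linarith)
  have h₁ : 1 + ((σ - 1) / 2)⁻¹ = (σ + 1) / (σ - 1) := by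
    have : σ - 1 ≠ 0 := by linarith
    field_simp
    ring
  have h₂ : 1 / (2 * ((σ - 1) / 2) + 1) = 1 / σ := by ring_nf
  rw [h₁, h₂] at hsum
  simpa [div_eq_mul_inv] using le_hasSum hsum 0 fun k _ => by positivity

lemma cosh_log_div_sub_one {σ : ℝ} (hσ : 1 < σ) :
    cosh (log ((σ + 1) / (σ - 1))) = (σ ^ 2 + 1) / (σ ^ 2 - 1) := by
  have h₀ : 0 < (σ + 1) / (σ - 1) := div_pos (by linarith) (by linarith)
  rw [cosh_eq, exp_neg, exp_log h₀]
  have : σ - 1 ≠ 0 := by linarith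
  have : σ + 1 ≠ 0 := by linarith
  have : σ ^ 2 - 1 ≠ 0 := by nlinarith
  field_simp
  ring

lemma exp_le_two_mul_eval_T_real {σ : ℝ} (hσ : 1 < σ) (n : ℕ) :
    exp (2 * n / σ) ≤ 2 * (T ℝ n).eval ((σ ^ 2 + 1) / (σ ^ 2 - 1)) := by
  set θ := log ((σ + 1) / (σ - 1))
  rw [← cosh_log_div_sub_one hσ, T_real_cosh, cosh_eq]
  have : 2 * n / σ ≤ n * θ := by
    rw [mul_comm, mul_div_assoc]
    exact mul_le_mul_of_nonneg_left (two_div_le_log_div_sub_one hσ) n.cast_nonneg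
  push_cast
  linarith [exp_le_exp.2 this, exp_pos (-(n * θ))]

noncomputable def scaledChebyshev (α β : ℝ) (n : ℕ) : ℝ[X] :=
  C ((T ℝ n).eval ((β + α) / (β - α)))⁻¹ *
    (T ℝ n).comp (C (-2 / (β - α)) * X + C ((β + α) / (β - α)))

variable {α β : ℝ}

lemma natDegree_scaledChebyshev_le (n : ℕ) : (scaledChebyshev α β n).natDegree ≤ n := by
  refine (natDegree_C_mul_le _ _).trans (natDegree_comp_le.trans ?_)
  rw [natDegree_T, Int.natAbs_natCast]
  exact (Nat.mul_le_mul_left n natDegree_linear_le).trans (mul_one n).le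

lemma eval_scaledChebyshev (n : ℕ) (x : ℝ) : (scaledChebyshev α β n).eval x =
    (T ℝ n).eval ((β + α - 2 * x) / (β - α)) / (T ℝ n).eval ((β + α) / (β - α)) := by
  simp only [scaledChebyshev, eval_mul, eval_C, eval_comp, eval_add, eval_X]
  rw [inv_mul_eq_div]
  ring_nf

lemma one_le_abs_eval_T_real_add_div_sub (hα : 0 < α) (hαβ : α < β) (n : ℕ) :
    1 ≤ |(T ℝ n).eval ((β + α) / (β - α))| := by
  refine one_le_abs_eval_T_real n ?_
  rw [abs_of_pos (by apply div_pos <;> linarith), one_le_div (by linarith)]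
  linarith

lemma eval_scaledChebyshev_zero (hα : 0 < α) (hαβ : α < β) (n : ℕ) :
    (scaledChebyshev α β n).eval 0 = 1 := by
  rw [eval_scaledChebyshev, mul_zero, sub_zero]
  exact div_self (abs_pos.1 (one_pos.trans_le (one_le_abs_eval_T_real_add_div_sub hα hαβ n)))

lemma abs_eval_scaledChebyshev_le (hαβ : α < β) (n : ℕ) {x : ℝ} (hx : x ∈ Set.Icc α β) :
    |(scaledChebyshev α β n).eval x| ≤ |(T ℝ n).eval ((β + α) / (β - α))|⁻¹ := by
  rw [eval_scaledChebyshev, abs_div, div_eq_mul_inv]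
  refine mul_le_of_le_one_left (by positivity) (abs_eval_T_real_le_one n ?_)
  rw [abs_div, abs_of_pos (by linarith : 0 < β - α), div_le_one (by linarith), abs_le]
  constructor <;> linarith [hx.1, hx.2]

lemma inv_abs_eval_T_real_add_div_sub_le (hα : 0 < α) (hαβ : α < β) (n : ℕ) :
    |(T ℝ n).eval ((β + α) / (β - α))|⁻¹ ≤ 2 * exp (-2 * n / √(β / α)) := by
  set σ := √(β / α)
  have hσ_sq : σ ^ 2 = β / α := sq_sqrt (div_pos (hα.trans hαβ) hα).le
  have hσ : 1 < σ := by
    rw [lt_sqrt zero_le_one, one_pow, one_lt_div hα]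
    exact hαβ
  have hx₀ : (σ ^ 2 + 1) / (σ ^ 2 - 1) = (β + α) / (β - α) := by
    rw [hσ_sq, div_add_one hα.ne', div_sub_one hα.ne', div_div_div_cancel_right₀ hα.ne']
  have hT := exp_le_two_mul_eval_T_real hσ n
  rw [hx₀] at hT
  rw [abs_of_pos (by linarith [exp_pos (2 * n / σ)]), neg_mul, neg_div, exp_neg,
    inv_le_comm₀ (by linarith [exp_pos (2 * n / σ)]) (by positivity), mul_inv, inv_inv]
  linarith

lemma exists_natDegree_le_eval_zero_abs_eval_le (hα : 0 < α) (hαβ : α ≤ β) (n : ℕ) :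
    ∃ q : ℝ[X], q.natDegree ≤ n ∧ q.eval 0 = 1 ∧
      ∀ x ∈ Set.Icc α β, |q.eval x| ≤ 2 * exp (-2 * n / √(β / α)) := by
  obtain hαβ | rfl := hαβ.lt_or_eq
  · exact ⟨scaledChebyshev α β n, natDegree_scaledChebyshev_le n,
      eval_scaledChebyshev_zero hα hαβ n, fun x hx =>
        (abs_eval_scaledChebyshev_le hαβ n hx).trans (inv_abs_eval_T_real_add_div_sub_le hα hαβ n)⟩
  · refine ⟨(C (-α⁻¹) * X + C 1) ^ n, (natDegree_pow_le_of_le n natDegree_linear_le).trans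
      (mul_one n).le, by simp, fun x hx => ?_⟩
    obtain rfl : α = x := le_antisymm hx.1 hx.2
    have hroot : (C (-α⁻¹) * X + C 1).eval α = 0 := by simp [hα.ne']
    rw [eval_pow, hroot, div_self hα.ne', sqrt_one]
    cases n with
    | zero => norm_num
    | succ n => rw [zero_pow n.succ_ne_zero, abs_zero]; positivity

end Chebyshev

section Matrix

open scoped Matrix.Norms.L2Operator

lemma Matrix.IsHermitian.spectrum_subset_Icc {n : Type*} [Fintype n] [DecidableEq n]
    {A : Matrix n n ℝ} (hA : A.IsHermitian) {α β : ℝ}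
    (h : ∀ x : n → ℝ, α * (x ⬝ᵥ x) ≤ x ⬝ᵥ A *ᵥ x ∧ x ⬝ᵥ A *ᵥ x ≤ β * (x ⬝ᵥ x)) :
    spectrum ℝ A ⊆ Set.Icc α β := by
  rw [hA.spectrum_real_eq_range_eigenvalues]
  rintro _ ⟨i, rfl⟩
  set v := hA.eigenvectorBasis i
  have hv : (⇑v : n → ℝ) ⬝ᵥ ⇑v = 1 := by
    have := real_inner_self_eq_norm_sq v
    rw [hA.eigenvectorBasis.orthonormal.1 i, EuclideanSpace.inner_eq_star_dotProduct] at this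
    simpa using this
  have hRayleigh := h v
  rw [hA.mulVec_eigenvectorBasis, dotProduct_smul, hv, smul_eq_mul] at hRayleigh
  simpa only [mul_one, Set.mem_Icc] using hRayleigh

lemma eNorm_eq_norm_toLp {d : ℕ} (x : Fin d → ℝ) :
    eNorm x = ‖(WithLp.toLp 2 x : EuclideanSpace ℝ (Fin d))‖ := by
  rw [EuclideanSpace.norm_eq, eNorm, dotProduct]
  simp [sq]

lemma eNorm_mulVec_le {d : ℕ} (A : Matrix (Fin d) (Fin d) ℝ) (x : Fin d → ℝ) :
    eNorm (A *ᵥ x) ≤ ‖A‖ * eNorm x := by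
  rw [eNorm_eq_norm_toLp, eNorm_eq_norm_toLp]
  exact A.l2_opNorm_mulVec (WithLp.toLp 2 x)

lemma Matrix.IsHermitian.eNorm_aeval_mulVec_le {d : ℕ} {A : Matrix (Fin d) (Fin d) ℝ}
    (hA : A.IsHermitian) {q : ℝ[X]} {c : ℝ} (hc : 0 ≤ c)
    (hq : ∀ y ∈ spectrum ℝ A, |q.eval y| ≤ c) (x : Fin d → ℝ) :
    eNorm (aeval A q *ᵥ x) ≤ c * eNorm x := by
  have hnorm : ‖aeval A q‖ ≤ c := by
    rw [← cfc_polynomial q A hA.isSelfAdjoint]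
    exact norm_cfc_le hc hq
  exact (eNorm_mulVec_le _ x).trans (mul_le_mul_of_nonneg_right hnorm (sqrt_nonneg _))

end Matrix

theorem stmt_9_general (α β : ℝ) (hα : 0 < α) (hαβ : α ≤ β) (t : ℕ) :
    ∃ p : Polynomial ℝ, p.natDegree ≤ t - 1 ∧
      ∀ (d : ℕ) (M : Matrix (Fin d) (Fin d) ℝ), M.IsSymm →
        (∀ x : Fin d → ℝ, α * (x ⬝ᵥ x) ≤ x ⬝ᵥ M.mulVec x ∧
            x ⬝ᵥ M.mulVec x ≤ β * (x ⬝ᵥ x)) →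
        ∀ x : Fin d → ℝ,
          eNorm (((1 : Matrix (Fin d) (Fin d) ℝ) - M * Polynomial.aeval M p).mulVec x)
            ≤ 2 * Real.exp (-2 * t / Real.sqrt (β / α)) * eNorm x := by
  obtain ⟨q, hq_deg, hq_zero, hq_le⟩ := exists_natDegree_le_eval_zero_abs_eval_le hα hαβ t
  refine ⟨(1 - q).divX, (natDegree_divX_one_sub_le q).trans (Nat.sub_le_sub_right hq_deg 1),
    fun d M hM_symm hRayleigh x => ?_⟩
  have hM : M.IsHermitian := isHermitian_iff_isSymm.2 hM_symm
  have hresidual : 1 - M * aeval M (1 - q).divX = aeval M q := by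
    conv_rhs => rw [← one_sub_X_mul_divX_one_sub hq_zero]
    simp
  rw [hresidual]
  exact hM.eNorm_aeval_mulVec_le (by positivity)
    (fun y hy => hq_le y (hM.spectrum_subset_Icc hRayleigh hy)) x

theorem stmt_9 (α β : ℝ) (hα : 0 < α) (hαβ : α ≤ β) (t : ℕ) (ht : 1 ≤ t) :
    ∃ p : Polynomial ℝ, p.natDegree ≤ t - 1 ∧
      ∀ (d : ℕ) (M : Matrix (Fin d) (Fin d) ℝ), M.IsSymm →
        (∀ x : Fin d → ℝ, α * (x ⬝ᵥ x) ≤ x ⬝ᵥ M.mulVec x ∧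
            x ⬝ᵥ M.mulVec x ≤ β * (x ⬝ᵥ x)) →
        ∀ x : Fin d → ℝ,
          eNorm (((1 : Matrix (Fin d) (Fin d) ℝ) - M * Polynomial.aeval M p).mulVec x)
            ≤ 2 * Real.exp (-2 * t / Real.sqrt (β / α)) * eNorm x :=
  stmt_9_general α β hα hαβ t
end

section
/- Let A be symmetric, b ∈ ℝ^d, ρ > 0, f(x) = (1/2)xᵀAx + bᵀx + (ρ/3)‖x‖³ with global minimizer s, and A_⋆ = A + ρ‖s‖I. For any x and one gradient step x⁺ = x − η∇f(x) with 0 < η ≤ 1/(4(β + ρR_ρ)) where β ≥ ‖A‖_op and R_ρ ≥ ‖s‖, ‖x‖: ‖x⁺ − s‖² ≤ (1 − (η/2)[3λ_min + ρ(‖s‖ + 2‖x‖)])‖x − s‖² − ηρ(‖s‖ − ‖x‖)²‖s‖. In particular, if ρ‖x‖ ≥ −λ_min − (1/2)(ρ‖s‖ + λ_min) + μ for μ ≥ 0, then ‖x⁺ − s‖² ≤ (1 − ημ)‖x − s‖². -/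
/-!
With `A⋆ = A + ρ‖s‖ I`, stationarity of `s` rewrites the gradient as
`∇f(x) = A⋆ (x - s) + ρ (‖x‖ - ‖s‖) x`. Expanding `‖x - η ∇f(x) - s‖²` with `u = x - s` leaves
`⟪A⋆ u, u⟫`, `ρ (‖x‖ - ‖s‖) ⟪u, x⟫` and `η² ‖∇f(x)‖²`. Cauchy–Schwarz for the semi-inner product
`⟪A⋆ ·, ·⟫` gives `‖A⋆ u‖² ≤ (β + ρ‖s‖) ⟪A⋆ u, u⟫`, so the step-size bound absorbs the quadratic
term into half of the first-order ones; `2 ⟪u, x⟫ = ‖x‖² - ‖s‖² + ‖u‖²` and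
`⟪A⋆ u, u⟫ ≥ (λ_min + ρ‖s‖) ‖u‖²` then produce the stated coefficients.
-/

open Matrix

open WithLp
open scoped RealInnerProductSpace

namespace LinearMap.IsPositive

variable {E : Type*} [NormedAddCommGroup E] [InnerProductSpace ℝ E] {T : E →ₗ[ℝ] E}

theorem inner_sq_le (hT : T.IsPositive) (a b : E) :
    ⟪T a, b⟫ ^ 2 ≤ ⟪T a, a⟫ * ⟪T b, b⟫ := by
  have hba : ⟪T b, a⟫ = ⟪T a, b⟫ := by rw [hT.isSymmetric, real_inner_comm]
  have h := discrim_le_zero (a := ⟪T b, b⟫) (b := 2 * ⟪T a, b⟫) (c := ⟪T a, a⟫) fun t => by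
    have := hT.inner_nonneg_left (t • b + a)
    simp only [map_add, map_smul, inner_add_left, inner_add_right, real_inner_smul_left,
      real_inner_smul_right, hba] at this
    linarith
  rw [discrim] at h
  nlinarith

theorem norm_apply_sq_le {L : ℝ} (hT : T.IsPositive) (hL : ∀ w, ‖T w‖ ≤ L * ‖w‖) (u : E) :
    ‖T u‖ ^ 2 ≤ L * ⟪T u, u⟫ := by
  rcases eq_or_ne (T u) 0 with hu | hu
  · simp [hu]
  have hcs := hT.inner_sq_le u (T u)
  have hTTu : ⟪T (T u), T u⟫ ≤ L * ‖T u‖ ^ 2 := calc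
    ⟪T (T u), T u⟫ ≤ ‖T (T u)‖ * ‖T u‖ := real_inner_le_norm _ _
    _ ≤ L * ‖T u‖ * ‖T u‖ := by gcongr; exact hL _
    _ = L * ‖T u‖ ^ 2 := by ring
  rw [real_inner_self_eq_norm_sq] at hcs
  have hpos : 0 < ‖T u‖ ^ 2 := by positivity
  nlinarith [mul_le_mul_of_nonneg_left hTTu (hT.inner_nonneg_left u)]

theorem norm_sub_smul_sub_sq_le {L m ρ η : ℝ} (hT : T.IsPositive)
    (hL : ∀ w, ‖T w‖ ≤ L * ‖w‖) (hm : ∀ w, m * ‖w‖ ^ 2 ≤ ⟪T w, w⟫) (hρ : 0 ≤ ρ) (hη : 0 ≤ η)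
    (s x : E) (hηL : η * L ≤ 1 / 4) (hηx : η * ρ * ‖x‖ ≤ 1 / 4) :
    ‖x - η • (T (x - s) + (ρ * (‖x‖ - ‖s‖)) • x) - s‖ ^ 2 ≤
      (1 - η * (3 / 2 * m + ρ * (‖x‖ - ‖s‖))) * ‖x - s‖ ^ 2
        - η * ρ * (‖s‖ - ‖x‖) ^ 2 * ‖s‖ := by
  set u := x - s
  set c := ρ * (‖x‖ - ‖s‖)
  set g := T u + c • x
  have hP := hT.inner_nonneg_left u
  have hexpand : ‖x - η • g - s‖ ^ 2 = ‖u‖ ^ 2 - 2 * η * ⟪g, u⟫ + η ^ 2 * ‖g‖ ^ 2 := by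
    rw [sub_right_comm, norm_sub_sq_real, norm_smul, real_inner_smul_right,
      real_inner_comm, Real.norm_eq_abs, abs_of_nonneg hη]
    ring
  have hgu : 2 * ⟪g, u⟫ = 2 * ⟪T u, u⟫ + c * (‖x‖ ^ 2 - ‖s‖ ^ 2 + ‖u‖ ^ 2) := by
    simp only [g, u, inner_add_left, real_inner_smul_left, norm_sub_sq_real, inner_sub_right,
      real_inner_self_eq_norm_sq]
    ring
  have hg : η * ‖g‖ ^ 2 ≤ ⟪T u, u⟫ / 2 + ρ * ‖x‖ * (‖x‖ - ‖s‖) ^ 2 / 2 := by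
    have hsum : ‖g‖ ^ 2 ≤ 2 * ‖T u‖ ^ 2 + 2 * (c * ‖x‖) ^ 2 := by
      have := norm_add_le (T u) (c • x)
      rw [norm_smul, Real.norm_eq_abs] at this
      nlinarith [sq_abs c, sq_nonneg (‖T u‖ - |c| * ‖x‖), norm_nonneg g]
    have h1 := mul_le_mul_of_nonneg_left (hT.norm_apply_sq_le hL u) hη
    have h2 := mul_le_mul_of_nonneg_right hηx
      (by positivity : 0 ≤ ρ * ‖x‖ * (‖x‖ - ‖s‖) ^ 2)
    nlinarith [mul_le_mul_of_nonneg_right hηL hP]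
  have hmu := mul_le_mul_of_nonneg_left (hm u) hη
  rw [hexpand]
  nlinarith [mul_nonneg (mul_nonneg hη (mul_nonneg hρ (norm_nonneg x))) (sq_nonneg (‖x‖ - ‖s‖))]

end LinearMap.IsPositive

section CubicRegularization

variable {E : Type*} [NormedAddCommGroup E] [InnerProductSpace ℝ E]

/-- The gradient of `x ↦ ½ ⟪A x, x⟫ + ⟪b, x⟫ + (ρ / 3) ‖x‖³` when `A` is symmetric. -/
def cubicGrad (A : E →ₗ[ℝ] E) (b : E) (ρ : ℝ) (x : E) : E :=
  A x + b + (ρ * ‖x‖) • x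

theorem cubicGrad_eq_of_cubicGrad_eq_zero {A : E →ₗ[ℝ] E} {b s : E} {ρ : ℝ}
    (hs : cubicGrad A b ρ s = 0) (x : E) :
    cubicGrad A b ρ x =
      (A + (ρ * ‖s‖) • LinearMap.id : E →ₗ[ℝ] E) (x - s) + (ρ * (‖x‖ - ‖s‖)) • x := by
  rw [← sub_zero (cubicGrad A b ρ x), ← hs]
  simp only [cubicGrad, LinearMap.add_apply, LinearMap.smul_apply, LinearMap.id_apply, map_sub]
  module

theorem norm_sub_cubicGrad_sub_sq_le {A : E →ₗ[ℝ] E} {b s x : E} {lmin ρ β R η : ℝ}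
    (hs : cubicGrad A b ρ s = 0) (hpos : (A + (ρ * ‖s‖) • LinearMap.id).IsPositive)
    (hmin : ∀ w, lmin * ‖w‖ ^ 2 ≤ ⟪A w, w⟫) (hop : ∀ w, ‖A w‖ ≤ β * ‖w‖) (hρ : 0 ≤ ρ)
    (hsR : ‖s‖ ≤ R) (hxR : ‖x‖ ≤ R) (hη : 0 < η) (hηβ : η ≤ 1 / (4 * (β + ρ * R))) :
    ‖x - η • cubicGrad A b ρ x - s‖ ^ 2 ≤
      (1 - (η / 2) * (3 * lmin + ρ * (‖s‖ + 2 * ‖x‖))) * ‖x - s‖ ^ 2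
        - η * ρ * (‖s‖ - ‖x‖) ^ 2 * ‖s‖ := by
  have hL (w : E) : ‖(A + (ρ * ‖s‖) • LinearMap.id : E →ₗ[ℝ] E) w‖ ≤ (β + ρ * ‖s‖) * ‖w‖ := by
    grw [LinearMap.add_apply, norm_add_le, LinearMap.smul_apply, LinearMap.id_apply, norm_smul,
      hop, Real.norm_of_nonneg (by positivity)]
    exact (add_mul _ _ _).ge
  have hm (w : E) :
      (lmin + ρ * ‖s‖) * ‖w‖ ^ 2 ≤ ⟪(A + (ρ * ‖s‖) • LinearMap.id : E →ₗ[ℝ] E) w, w⟫ := by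
    rw [LinearMap.add_apply, LinearMap.smul_apply, LinearMap.id_apply, inner_add_left,
      real_inner_smul_left, real_inner_self_eq_norm_sq]
    linarith [hmin w]
  have hβR : 0 < β + ρ * R := by
    by_contra! h
    have : 1 / (4 * (β + ρ * R)) ≤ 0 := div_nonpos_of_nonneg_of_nonpos zero_le_one (by linarith)
    linarith
  rw [le_div_iff₀ (by positivity)] at hηβ
  have hηL : η * (β + ρ * ‖s‖) ≤ 1 / 4 := by
    nlinarith [mul_le_mul_of_nonneg_left hsR (mul_nonneg hη.le hρ)]
  have hηx : η * ρ * ‖x‖ ≤ 1 / 4 := by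
    -- `β ≥ 0` fails when `E` is trivial; only `β ‖x‖ ≥ ‖A x‖ ≥ 0` is available.
    have hβx : 0 ≤ β * ‖x‖ := (norm_nonneg _).trans (hop x)
    have : ‖x‖ * (η * ρ * ‖x‖ - 1 / 4) ≤ 0 := by
      nlinarith [mul_le_mul_of_nonneg_left hxR (mul_nonneg (mul_nonneg hη.le hρ) (norm_nonneg x)),
        mul_le_mul_of_nonneg_right hηβ (norm_nonneg x), mul_nonneg hη.le hβx]
    rcases (norm_nonneg x).eq_or_lt with h | h
    · rw [← h]; norm_num
    · nlinarith
  have key := hpos.norm_sub_smul_sub_sq_le hL hm hρ hη.le s x hηL hηx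
  rw [cubicGrad_eq_of_cubicGrad_eq_zero hs]
  linarith

end CubicRegularization

theorem eNorm_eq_norm {d : ℕ} (v : Fin d → ℝ) : eNorm v = ‖toLp 2 v‖ := by
  rw [eNorm, norm_eq_sqrt_real_inner, EuclideanSpace.inner_toLp_toLp, star_trivial]

theorem dotProduct_eq_inner {n : Type*} [Fintype n] (v w : n → ℝ) :
    v ⬝ᵥ w = ⟪toLp 2 w, toLp 2 v⟫ := by
  rw [EuclideanSpace.inner_toLp_toLp, star_trivial]

theorem stmt_15_general {d : ℕ} (A : Matrix (Fin d) (Fin d) ℝ)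
    (lmin : ℝ)
    (hmin : ∀ y, lmin * (y ⬝ᵥ y) ≤ y ⬝ᵥ A.mulVec y)
    (b : Fin d → ℝ) (ρ : ℝ) (hρ : 0 < ρ)
    (s : Fin d → ℝ)
    (hstat : (A + (ρ * eNorm s) • (1 : Matrix (Fin d) (Fin d) ℝ)).mulVec s + b = 0)
    (hpsd : (A + (ρ * eNorm s) • (1 : Matrix (Fin d) (Fin d) ℝ)).PosSemidef)
    (β Rρ : ℝ)
    (hop : ∀ y, eNorm (A.mulVec y) ≤ β * eNorm y)
    (x : Fin d → ℝ)
    (hRs : eNorm s ≤ Rρ) (hRx : eNorm x ≤ Rρ)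
    (η : ℝ) (hη0 : 0 < η) (hη : η ≤ 1 / (4 * (β + ρ * Rρ)))
    (xp : Fin d → ℝ)
    (hxp : xp = x - η • (A.mulVec x + b + (ρ * eNorm x) • x)) :
    eNorm (xp - s) ^ 2 ≤
      (1 - (η / 2) * (3 * lmin + ρ * (eNorm s + 2 * eNorm x))) * eNorm (x - s) ^ 2
      - η * ρ * (eNorm s - eNorm x) ^ 2 * eNorm s ∧
    ∀ μ : ℝ, 0 ≤ μ → ρ * eNorm x ≥ -lmin - (1/2) * (ρ * eNorm s + lmin) + μ →
      eNorm (xp - s) ^ 2 ≤ (1 - η * μ) * eNorm (x - s) ^ 2 := by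
  have hgrad (v : Fin d → ℝ) : cubicGrad (toEuclideanLin A) (toLp 2 b) ρ (toLp 2 v) =
      toLp 2 (A *ᵥ v + b + (ρ * eNorm v) • v) := by
    rw [cubicGrad, toLpLin_toLp, eNorm_eq_norm]; rfl
  have hs : cubicGrad (toEuclideanLin A) (toLp 2 b) ρ (toLp 2 s) = 0 := by
    rw [hgrad, ← toLp_zero, ← hstat, add_mulVec, smul_mulVec, one_mulVec, add_right_comm]
  have hpos : (toEuclideanLin A + (ρ * ‖toLp 2 s‖) • LinearMap.id).IsPositive := by
    rw [← eNorm_eq_norm, ← toLpLin_one, ← map_smul, ← map_add]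
    exact isPositive_toEuclideanLin_iff.mpr hpsd
  have key := norm_sub_cubicGrad_sub_sq_le hs hpos
    (fun w => by simpa [toLpLin_apply, dotProduct_eq_inner, eNorm_eq_norm] using hmin (ofLp w))
    (fun w => by simpa [toLpLin_apply, eNorm_eq_norm] using hop (ofLp w)) hρ.le
    (by rwa [← eNorm_eq_norm]) (by rwa [← eNorm_eq_norm]) hη0 hη
  rw [hgrad, ← toLp_smul, ← toLp_sub, ← toLp_sub, ← toLp_sub, ← hxp] at key
  simp only [← eNorm_eq_norm] at key
  refine ⟨key, fun μ _ hx => ?_⟩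
  have hσ : 0 ≤ eNorm s := Real.sqrt_nonneg _
  have hcoef : 1 - (η / 2) * (3 * lmin + ρ * (eNorm s + 2 * eNorm x)) ≤ 1 - η * μ := by
    nlinarith
  linarith [mul_le_mul_of_nonneg_right hcoef (sq_nonneg (eNorm (x - s))),
    mul_nonneg (mul_nonneg (mul_nonneg hη0.le hρ.le) (sq_nonneg (eNorm s - eNorm x))) hσ]

theorem stmt_15 {d : ℕ} (A : Matrix (Fin d) (Fin d) ℝ) (hA : A.IsSymm)
    (lmin : ℝ)
    (hmin : ∀ y, lmin * (y ⬝ᵥ y) ≤ y ⬝ᵥ A.mulVec y)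
    (hex : ∃ v : Fin d → ℝ, v ≠ 0 ∧ A.mulVec v = lmin • v)
    (b : Fin d → ℝ) (ρ : ℝ) (hρ : 0 < ρ)
    (s : Fin d → ℝ)
    (hstat : (A + (ρ * eNorm s) • (1 : Matrix (Fin d) (Fin d) ℝ)).mulVec s + b = 0)
    (hpsd : (A + (ρ * eNorm s) • (1 : Matrix (Fin d) (Fin d) ℝ)).PosSemidef)
    (hglob : ∀ y, (1/2) * (s ⬝ᵥ A.mulVec s) + b ⬝ᵥ s + (ρ/3) * eNorm s ^ 3
      ≤ (1/2) * (y ⬝ᵥ A.mulVec y) + b ⬝ᵥ y + (ρ/3) * eNorm y ^ 3)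
    (β Rρ : ℝ)
    (hop : ∀ y, eNorm (A.mulVec y) ≤ β * eNorm y)
    (x : Fin d → ℝ)
    (hRs : eNorm s ≤ Rρ) (hRx : eNorm x ≤ Rρ)
    (η : ℝ) (hη0 : 0 < η) (hη : η ≤ 1 / (4 * (β + ρ * Rρ)))
    (xp : Fin d → ℝ)
    (hxp : xp = x - η • (A.mulVec x + b + (ρ * eNorm x) • x)) :
    eNorm (xp - s) ^ 2 ≤
      (1 - (η / 2) * (3 * lmin + ρ * (eNorm s + 2 * eNorm x))) * eNorm (x - s) ^ 2
      - η * ρ * (eNorm s - eNorm x) ^ 2 * eNorm s ∧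
    ∀ μ : ℝ, 0 ≤ μ → ρ * eNorm x ≥ -lmin - (1/2) * (ρ * eNorm s + lmin) + μ →
      eNorm (xp - s) ^ 2 ≤ (1 - η * μ) * eNorm (x - s) ^ 2 :=
  stmt_15_general A lmin hmin b ρ hρ s hstat hpsd β Rρ hop x hRs hRx η hη0 hη xp hxp
end

section
/- Let A ⪰ −ρrI and A ⪯ βI be symmetric for ρ, r, β > 0, and b ∈ ℝ^d. Consider the strongly convex regularized quadratic h(z) = (1/2)zᵀ(A + 2ρrI)z + bᵀz with minimizer x_⋆ = −(A + 2ρrI)^{-1}b, and suppose ‖x_⋆‖ ≤ r. If x satisfies h(x) − h(x_⋆) ≤ ε_g²/(2(β + 2ρr)) and ‖x‖ ≤ ‖x_⋆‖, then ‖x‖ ≤ r and ‖Ax + b‖ ≤ ε_g + 2ρr². -/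
open Matrix

lemma eNorm_eq_norm_s17 {d : ℕ} (x : Fin d → ℝ) :
    eNorm x = ‖(WithLp.equiv 2 (Fin d → ℝ)).symm x‖ := by
  rw [eNorm, EuclideanSpace.norm_eq]
  congr 1
  simp [dotProduct, Real.norm_eq_abs, sq_abs, sq]

lemma eNorm_add_le {d : ℕ} (u w : Fin d → ℝ) : eNorm (u + w) ≤ eNorm u + eNorm w := by
  simp only [eNorm_eq_norm_s17]
  exact norm_add_le ((WithLp.equiv 2 (Fin d → ℝ)).symm u) ((WithLp.equiv 2 (Fin d → ℝ)).symm w)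

lemma eNorm_smul {d : ℕ} (c : ℝ) (x : Fin d → ℝ) : eNorm (c • x) = |c| * eNorm x := by
  simp only [eNorm_eq_norm_s17]
  rw [show (WithLp.equiv 2 (Fin d → ℝ)).symm (c • x)
      = c • (WithLp.equiv 2 (Fin d → ℝ)).symm x from rfl, norm_smul, Real.norm_eq_abs]

theorem stmt_17 {d : ℕ} (A : Matrix (Fin d) (Fin d) ℝ) (hA : A.IsSymm)
    (ρ r β : ℝ) (hρ : 0 < ρ) (hr : 0 < r) (hβ : 0 < β)
    (hlb : ∀ z, -(ρ * r) * (z ⬝ᵥ z) ≤ z ⬝ᵥ A.mulVec z)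
    (hub : ∀ z, z ⬝ᵥ A.mulVec z ≤ β * (z ⬝ᵥ z))
    (b : Fin d → ℝ)
    (h : (Fin d → ℝ) → ℝ)
    (hh : ∀ z, h z = (1/2) * (z ⬝ᵥ (A + (2 * ρ * r) • (1 : Matrix (Fin d) (Fin d) ℝ)).mulVec z)
      + b ⬝ᵥ z)
    (xstar : Fin d → ℝ)
    (hxstar : (A + (2 * ρ * r) • (1 : Matrix (Fin d) (Fin d) ℝ)).mulVec xstar = -b)
    (hxstarnorm : eNorm xstar ≤ r)
    (εg : ℝ) (hεg : 0 < εg)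
    (x : Fin d → ℝ)
    (hgap : h x - h xstar ≤ εg ^ 2 / (2 * (β + 2 * ρ * r)))
    (hxnorm : eNorm x ≤ eNorm xstar) :
    eNorm x ≤ r ∧ eNorm (A.mulVec x + b) ≤ εg + 2 * ρ * r ^ 2 := by
  set c : ℝ := 2 * ρ * r with hc
  set L : ℝ := β + c with hL
  have hcpos : 0 < c := by positivity
  have hLpos : 0 < L := by positivity
  set M : Matrix (Fin d) (Fin d) ℝ := A + c • (1 : Matrix (Fin d) (Fin d) ℝ) with hM
  -- basic facts
  have hMv : ∀ z : Fin d → ℝ, M.mulVec z = A.mulVec z + c • z := by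
    intro z
    simp [hM, Matrix.add_mulVec, Matrix.smul_mulVec]
  have hself : ∀ z : Fin d → ℝ, 0 ≤ z ⬝ᵥ z := by
    intro z
    simp only [dotProduct]
    exact Finset.sum_nonneg fun i _ => mul_self_nonneg _
  have hquadM : ∀ z : Fin d → ℝ, z ⬝ᵥ M.mulVec z = z ⬝ᵥ A.mulVec z + c * (z ⬝ᵥ z) := by
    intro z
    rw [hMv]
    simp [dotProduct_add, dotProduct_smul]
  have hMpos : ∀ z : Fin d → ℝ, 0 ≤ z ⬝ᵥ M.mulVec z := by
    intro z
    have h1 := hlb z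
    have h2 := hself z
    rw [hquadM]
    nlinarith [mul_pos hρ hr]
  have hMub : ∀ z : Fin d → ℝ, z ⬝ᵥ M.mulVec z ≤ L * (z ⬝ᵥ z) := by
    intro z
    have h1 := hub z
    rw [hquadM, hL]
    nlinarith
  have hMsymm : M.IsSymm := by
    rw [Matrix.IsSymm, hM, Matrix.transpose_add, Matrix.transpose_smul, Matrix.transpose_one, hA]
  have hsym : ∀ u w : Fin d → ℝ, u ⬝ᵥ M.mulVec w = w ⬝ᵥ M.mulVec u := by
    intro u w
    rw [Matrix.dotProduct_mulVec, ← Matrix.mulVec_transpose, hMsymm, dotProduct_comm]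
  set v : Fin d → ℝ := x - xstar with hv
  set g : Fin d → ℝ := M.mulVec v with hg
  have hgx : g = M.mulVec x + b := by
    rw [hg, hv, Matrix.mulVec_sub, hxstar, sub_neg_eq_add]
  -- gap identity
  have hbx : ∀ z : Fin d → ℝ, b ⬝ᵥ z = -(xstar ⬝ᵥ M.mulVec z) := by
    intro z
    have : b = -(M.mulVec xstar) := by rw [hxstar]; simp
    rw [this, neg_dotProduct, dotProduct_comm, hsym]
  have hgapid : h x - h xstar = (1/2) * (v ⬝ᵥ g) := by
    rw [hh, hh, hbx x, hbx xstar, hg, hv]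
    rw [Matrix.mulVec_sub, dotProduct_sub, sub_dotProduct, sub_dotProduct]
    have e1 : x ⬝ᵥ M.mulVec xstar = xstar ⬝ᵥ M.mulVec x := hsym x xstar
    ring_nf
    rw [e1]
    ring
  have hvg : 0 ≤ v ⬝ᵥ g := by rw [hg]; exact hMpos v
  -- key inequality: g ⬝ᵥ g ≤ L * (v ⬝ᵥ g)
  have hkey : g ⬝ᵥ g ≤ L * (v ⬝ᵥ g) := by
    have h0 := hMpos (L • v - g)
    have hexp : (L • v - g) ⬝ᵥ M.mulVec (L • v - g)
        = L^2 * (v ⬝ᵥ g) - 2 * L * (g ⬝ᵥ g) + (g ⬝ᵥ M.mulVec g) := by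
      rw [Matrix.mulVec_sub, Matrix.mulVec_smul, ← hg]
      rw [sub_dotProduct, dotProduct_sub, dotProduct_sub, smul_dotProduct,
        dotProduct_smul, smul_dotProduct, dotProduct_smul]
      have e1 : v ⬝ᵥ M.mulVec g = g ⬝ᵥ M.mulVec v := hsym v g
      rw [e1, ← hg]
      simp only [smul_eq_mul]
      ring
    have hub2 := hMub g
    rw [hexp] at h0
    nlinarith [mul_pos hLpos hLpos]
  have hgg : g ⬝ᵥ g ≤ εg ^ 2 := by
    have h2 : v ⬝ᵥ g ≤ εg ^ 2 / L := by
      have h3 := hgap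
      rw [hgapid] at h3
      have h4 : εg ^ 2 / (2 * L) = εg ^ 2 / L / 2 := by
        rw [div_div]; ring_nf
      linarith [h3, h4.le, h4.ge]
    calc g ⬝ᵥ g ≤ L * (v ⬝ᵥ g) := hkey
      _ ≤ L * (εg ^ 2 / L) := by
          exact mul_le_mul_of_nonneg_left h2 hLpos.le
      _ = εg ^ 2 := by field_simp
  have hgnorm : eNorm g ≤ εg := by
    rw [eNorm]
    calc Real.sqrt (g ⬝ᵥ g) ≤ Real.sqrt (εg ^ 2) := Real.sqrt_le_sqrt hgg
      _ = εg := by rw [Real.sqrt_sq hεg.le]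
  have hxr : eNorm x ≤ r := le_trans hxnorm hxstarnorm
  refine ⟨hxr, ?_⟩
  have hdecomp : A.mulVec x + b = g + (-c) • x := by
    rw [hgx, hMv]
    module
  rw [hdecomp]
  calc eNorm (g + (-c) • x) ≤ eNorm g + eNorm ((-c) • x) := eNorm_add_le _ _
    _ = eNorm g + c * eNorm x := by rw [eNorm_smul, abs_neg, abs_of_pos hcpos]
    _ ≤ εg + c * r := by nlinarith [eNorm_nonneg x]
    _ = εg + 2 * ρ * r ^ 2 := by rw [hc]; ring
end

section
/- Let A be symmetric with ‖A‖_op ≤ β, b ∈ ℝ^d, ρ > 0, r > 0, and let s be the global minimizer of f_cu(x) = (1/2)xᵀAx + bᵀx + (ρ/3)‖x‖³. Then f_cu(s) ≤ −(ρ/6)‖s‖³. Consequently, if x satisfies f_cu(x) ≤ f_cu(s) + (ρr/12)‖s‖² and ‖s‖ ≥ r, then f_cu(x) ≤ −(ρ/12)r³. -/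
open Matrix

noncomputable def cubicModel {d : ℕ} (A : Matrix (Fin d) (Fin d) ℝ) (b : Fin d → ℝ) (ρ : ℝ)
    (x : Fin d → ℝ) : ℝ :=
  (1/2) * (x ⬝ᵥ A *ᵥ x) + b ⬝ᵥ x + (ρ/3) * eNorm x ^ 3

section Stationary

variable {d : ℕ} {A : Matrix (Fin d) (Fin d) ℝ} {b : Fin d → ℝ} {ρ : ℝ} {s : Fin d → ℝ}

lemma cubicModel_eq_of_stationary
    (hstat : (A + (ρ * eNorm s) • (1 : Matrix (Fin d) (Fin d) ℝ)) *ᵥ s = -b) :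
    cubicModel A b ρ s =
      -(1/2) * (s ⬝ᵥ (A + (ρ * eNorm s) • (1 : Matrix (Fin d) (Fin d) ℝ)) *ᵥ s)
        - (ρ/6) * eNorm s ^ 3 := by
  have hb : b ⬝ᵥ s = -(s ⬝ᵥ (A + (ρ * eNorm s) • (1 : Matrix (Fin d) (Fin d) ℝ)) *ᵥ s) := by
    rw [hstat, dotProduct_neg, dotProduct_comm, neg_neg]
  have hquad : s ⬝ᵥ (A + (ρ * eNorm s) • (1 : Matrix (Fin d) (Fin d) ℝ)) *ᵥ s
      = s ⬝ᵥ A *ᵥ s + ρ * eNorm s ^ 3 := by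
    rw [add_mulVec, smul_mulVec, one_mulVec, dotProduct_add, dotProduct_smul, smul_eq_mul,
      ← eNorm_sq]
    ring
  rw [cubicModel, hb, hquad]
  ring

lemma cubicModel_le_of_stationary_of_posSemidef
    (hstat : (A + (ρ * eNorm s) • (1 : Matrix (Fin d) (Fin d) ℝ)) *ᵥ s = -b)
    (hpsd : (A + (ρ * eNorm s) • (1 : Matrix (Fin d) (Fin d) ℝ)).PosSemidef) :
    cubicModel A b ρ s ≤ -(ρ/6) * eNorm s ^ 3 := by
  have hnonneg := hpsd.dotProduct_mulVec_nonneg s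
  rw [star_trivial] at hnonneg
  rw [cubicModel_eq_of_stationary hstat]
  linarith

end Stationary

lemma cubic_bound_of_le {ρ r n f : ℝ} (hρ : 0 ≤ ρ) (hrn : r ≤ n)
    (hf : f ≤ -(ρ/6) * n ^ 3 + (ρ * r / 12) * n ^ 2) :
    f ≤ -(ρ/12) * r ^ 3 := by
  have hcube : r ^ 3 ≤ n ^ 3 := Odd.pow_le_pow (by decide) |>.mpr hrn
  have hquad : r * n ^ 2 ≤ n * n ^ 2 := mul_le_mul_of_nonneg_right hrn (sq_nonneg n)
  nlinarith [mul_le_mul_of_nonneg_left hcube hρ, mul_le_mul_of_nonneg_left hquad hρ]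

theorem stmt_19_general {d : ℕ} (A : Matrix (Fin d) (Fin d) ℝ)
    (b : Fin d → ℝ) (ρ r : ℝ) (hρ : 0 < ρ)
    (fcu : (Fin d → ℝ) → ℝ)
    (hfcu : ∀ x, fcu x = (1/2) * (x ⬝ᵥ A.mulVec x) + b ⬝ᵥ x + (ρ/3) * eNorm x ^ 3)
    (s : Fin d → ℝ)
    (hstat : (A + (ρ * eNorm s) • (1 : Matrix (Fin d) (Fin d) ℝ)).mulVec s = -b)
    (hpsd : (A + (ρ * eNorm s) • (1 : Matrix (Fin d) (Fin d) ℝ)).PosSemidef) :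
    fcu s ≤ -(ρ/6) * eNorm s ^ 3 ∧
    ∀ x : Fin d → ℝ, fcu x ≤ fcu s + (ρ * r / 12) * eNorm s ^ 2 → r ≤ eNorm s →
      fcu x ≤ -(ρ/12) * r ^ 3 := by
  obtain rfl : fcu = cubicModel A b ρ := funext hfcu
  have hs := cubicModel_le_of_stationary_of_posSemidef hstat hpsd
  exact ⟨hs, fun x hx hrs => cubic_bound_of_le hρ.le hrs (by linarith)⟩

theorem stmt_19 {d : ℕ} (A : Matrix (Fin d) (Fin d) ℝ) (hA : A.IsSymm)
    (β : ℝ) (hop : ∀ y, eNorm (A.mulVec y) ≤ β * eNorm y)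
    (b : Fin d → ℝ) (ρ r : ℝ) (hρ : 0 < ρ) (hr : 0 < r)
    (fcu : (Fin d → ℝ) → ℝ)
    (hfcu : ∀ x, fcu x = (1/2) * (x ⬝ᵥ A.mulVec x) + b ⬝ᵥ x + (ρ/3) * eNorm x ^ 3)
    (s : Fin d → ℝ)
    (hglob : ∀ x, fcu s ≤ fcu x)
    (hstat : (A + (ρ * eNorm s) • (1 : Matrix (Fin d) (Fin d) ℝ)).mulVec s = -b)
    (hpsd : (A + (ρ * eNorm s) • (1 : Matrix (Fin d) (Fin d) ℝ)).PosSemidef) :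
    fcu s ≤ -(ρ/6) * eNorm s ^ 3 ∧
    ∀ x : Fin d → ℝ, fcu x ≤ fcu s + (ρ * r / 12) * eNorm s ^ 2 → r ≤ eNorm s →
      fcu x ≤ -(ρ/12) * r ^ 3 :=
  stmt_19_general A b ρ r hρ fcu hfcu s hstat hpsd
end
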